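/- arXiv:1404.3637 — 3 statements merged into one kernel-verified Lean document; each statement's English description precedes it below -/
import Mathlib

section
/- Every finite exact potential game admits at least one pure Nash equilibrium. -/
theorem update_le_of_isMaxOn_potential {ι : Type*} [DecidableEq ι] {A : ι → Type*}
    (U : ι → (∀ i, A i) → ℝ) (φ : (∀ i, A i) → ℝ)
    (hpot : ∀ (i : ι) (a : ∀ j, A j) (b : A i),
      U i a - U i (Function.update a i b) = φ a - φ (Function.update a i b))
    {astar : ∀ j, A j} (hmax : IsMaxOn φ Set.univ astar) (i : ι) (b : A i) :
    U i (Function.update astar i b) ≤ U i astar := by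
  have hφ : φ (Function.update astar i b) ≤ φ astar := hmax (Set.mem_univ _)
  linarith [hpot i astar b]

theorem stmt_1_general {ι : Type*} [Fintype ι] [DecidableEq ι]
    {A : ι → Type*} [∀ i, Fintype (A i)] [∀ i, Nonempty (A i)]
    (U : ι → (∀ i, A i) → ℝ) (φ : (∀ i, A i) → ℝ)
    (hpot : ∀ (i : ι) (a : ∀ j, A j) (b : A i),
      U i a - U i (Function.update a i b) = φ a - φ (Function.update a i b)) :
    ∃ astar : ∀ j, A j, ∀ (i : ι) (b : A i),
      U i (Function.update astar i b) ≤ U i astar := by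
  obtain ⟨astar, hmax⟩ := Finite.exists_max φ
  exact ⟨astar, update_le_of_isMaxOn_potential U φ hpot fun a _ => hmax a⟩

/-- Every finite exact potential game admits at least one pure Nash equilibrium. -/
theorem stmt_1 {ι : Type*} [Fintype ι] [DecidableEq ι] [Nonempty ι]
    {A : ι → Type*} [∀ i, Fintype (A i)] [∀ i, Nonempty (A i)]
    (U : ι → (∀ i, A i) → ℝ) (φ : (∀ i, A i) → ℝ)
    (hpot : ∀ (i : ι) (a : ∀ j, A j) (b : A i),
      U i a - U i (Function.update a i b) = φ a - φ (Function.update a i b)) :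
    ∃ astar : ∀ j, A j, ∀ (i : ι) (b : A i),
      U i (Function.update astar i b) ≤ U i astar :=
  stmt_1_general U φ hpot
end

section
/- Consider M ≥ 3 players with action set {0,1} each, and common cost function φ'(a) = C + d_i if ‖a‖₁ = 1 with transmitter i, and φ'(a) = C + W if ‖a‖₁ ≠ 1, where C ≥ 0, W ≥ 1, and 0 ≤ d_i ≤ W - 1 for all i (so a single transmission is never worse than no/multiple transmissions). Players maximize U = -φ'. Then: (a) profiles with ‖a‖₁ = 0 are not Nash equilibria; (b) profiles with ‖a‖₁ = 2 are not Nash equilibria; (c) every profile with ‖a‖₁ = 1 or ‖a‖₁ > 2 is a Nash equilibrium. -/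
/-! A single transmitter is the only profile whose cost is below the "collision" cost `C + W`.
A profile with no transmitter or with two transmitters is one flip away from a single
transmitter, so some player can strictly lower the cost. From one transmitter, or from three
or more, every flip leads to a profile with zero or at least two transmitters, whose cost
`C + W` is maximal. -/

/-- The number of transmitting players in an action profile. -/
def norm1 {M : ℕ} (a : Fin M → Bool) : ℕ := ∑ i, if a i then 1 else 0

open Finset Function

section Norm1

variable {M : ℕ}

lemma norm1_update (a : Fin M → Bool) (i : Fin M) (b : Bool) :
    norm1 (update a i b) + (if a i then 1 else 0) = norm1 a + (if b then 1 else 0) := by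
  have hrest : ∑ j ∈ univ.erase i, (if update a i b j then 1 else 0) =
      ∑ j ∈ univ.erase i, (if a j then 1 else 0) :=
    sum_congr rfl fun j hj => by rw [update_of_ne (ne_of_mem_erase hj)]
  unfold norm1
  rw [← add_sum_erase univ _ (mem_univ i), ← add_sum_erase univ (fun j => if a j then 1 else 0)
    (mem_univ i), hrest, update_self]
  ring

lemma norm1_update_true {a : Fin M → Bool} {i : Fin M} (h : a i = false) :
    norm1 (update a i true) = norm1 a + 1 := by
  simpa [h] using norm1_update a i true

lemma norm1_update_false {a : Fin M → Bool} {i : Fin M} (h : a i = true) :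
    norm1 (update a i false) + 1 = norm1 a := by
  simpa [h] using norm1_update a i false

lemma norm1_eq_zero_iff {a : Fin M → Bool} : norm1 a = 0 ↔ ∀ i, a i = false := by
  simp [norm1]

lemma exists_eq_true_of_norm1_ne_zero {a : Fin M → Bool} (h : norm1 a ≠ 0) :
    ∃ i, a i = true := by
  simpa [norm1_eq_zero_iff] using h

lemma norm1_update_ne_one {a : Fin M → Bool} (ha : norm1 a = 1 ∨ 2 < norm1 a) {i : Fin M}
    {b : Bool} (hb : b ≠ a i) : norm1 (update a i b) ≠ 1 := by
  have h := norm1_update a i b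
  cases b <;> cases hai : a i <;> simp_all <;> omega

end Norm1

section Cost

variable {M : ℕ} {C W : ℝ} {d : Fin M → ℝ} {φ' : (Fin M → Bool) → ℝ}

lemma cost_lt_of_norm1_eq_one (hd1 : ∀ i, d i ≤ W - 1)
    (hc1 : ∀ (a : Fin M → Bool) (i : Fin M), norm1 a = 1 → a i = true → φ' a = C + d i)
    {a : Fin M → Bool} (ha : norm1 a = 1) : φ' a < C + W := by
  obtain ⟨i, hi⟩ := exists_eq_true_of_norm1_ne_zero (ha.trans_ne one_ne_zero)
  linarith [hc1 a i ha hi, hd1 i]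

lemma cost_le (hd1 : ∀ i, d i ≤ W - 1)
    (hc1 : ∀ (a : Fin M → Bool) (i : Fin M), norm1 a = 1 → a i = true → φ' a = C + d i)
    (hc2 : ∀ a : Fin M → Bool, norm1 a ≠ 1 → φ' a = C + W) (a : Fin M → Bool) :
    φ' a ≤ C + W := by
  by_cases ha : norm1 a = 1
  · exact (cost_lt_of_norm1_eq_one hd1 hc1 ha).le
  · exact (hc2 a ha).le

lemma cost_update_lt (hd1 : ∀ i, d i ≤ W - 1)
    (hc1 : ∀ (a : Fin M → Bool) (i : Fin M), norm1 a = 1 → a i = true → φ' a = C + d i)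
    (hc2 : ∀ a : Fin M → Bool, norm1 a ≠ 1 → φ' a = C + W) {a : Fin M → Bool} {i : Fin M}
    {b : Bool} (ha : norm1 a ≠ 1) (hab : norm1 (update a i b) = 1) :
    φ' (update a i b) < φ' a :=
  hc2 a ha ▸ cost_lt_of_norm1_eq_one hd1 hc1 hab

end Cost

theorem stmt_5_general {M : ℕ} (hM : 3 ≤ M) (C W : ℝ) (d : Fin M → ℝ)
    (hd1 : ∀ i, d i ≤ W - 1)
    (φ' : (Fin M → Bool) → ℝ)
    (hc1 : ∀ (a : Fin M → Bool) (i : Fin M),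
      norm1 a = 1 → a i = true → φ' a = C + d i)
    (hc2 : ∀ a : Fin M → Bool, norm1 a ≠ 1 → φ' a = C + W) :
    (∀ a : Fin M → Bool, norm1 a = 0 →
      ¬ (∀ (i : Fin M) (b : Bool), φ' a ≤ φ' (Function.update a i b))) ∧
    (∀ a : Fin M → Bool, norm1 a = 2 →
      ¬ (∀ (i : Fin M) (b : Bool), φ' a ≤ φ' (Function.update a i b))) ∧
    (∀ a : Fin M → Bool, (norm1 a = 1 ∨ 2 < norm1 a) →
      ∀ (i : Fin M) (b : Bool), φ' a ≤ φ' (Function.update a i b)) := by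
  refine ⟨fun a ha hNE => ?_, fun a ha hNE => ?_, fun a ha i b => ?_⟩
  · let i : Fin M := ⟨0, by omega⟩
    have hflip : norm1 (update a i true) = 1 := by
      rw [norm1_update_true (norm1_eq_zero_iff.1 ha i), ha]
    exact (hNE i true).not_gt (cost_update_lt hd1 hc1 hc2 (by omega) hflip)
  · obtain ⟨i, hi⟩ := exists_eq_true_of_norm1_ne_zero (by omega : norm1 a ≠ 0)
    have hflip : norm1 (update a i false) = 1 := by
      have := norm1_update_false hi
      omega
    exact (hNE i false).not_gt (cost_update_lt hd1 hc1 hc2 (by omega) hflip)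
  · by_cases hb : b = a i
    · rw [hb, update_eq_self]
    · rw [hc2 _ (norm1_update_ne_one ha hb)]
      exact cost_le hd1 hc1 hc2 a

/-- Sum decoding delay game (Game 3): with cost C + dᵢ for a single transmitter i
and C + W otherwise (0 ≤ dᵢ ≤ W - 1): (a) profiles with ‖a‖₁ = 0 are not NE,
(b) profiles with ‖a‖₁ = 2 are not NE, (c) every profile with ‖a‖₁ = 1 or ‖a‖₁ > 2 is a NE. -/
theorem stmt_5 {M : ℕ} (hM : 3 ≤ M) (C W : ℝ) (d : Fin M → ℝ)
    (hC : 0 ≤ C) (hW : 1 ≤ W)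
    (hd0 : ∀ i, 0 ≤ d i) (hd1 : ∀ i, d i ≤ W - 1)
    (φ' : (Fin M → Bool) → ℝ)
    (hc1 : ∀ (a : Fin M → Bool) (i : Fin M),
      norm1 a = 1 → a i = true → φ' a = C + d i)
    (hc2 : ∀ a : Fin M → Bool, norm1 a ≠ 1 → φ' a = C + W) :
    (∀ a : Fin M → Bool, norm1 a = 0 →
      ¬ (∀ (i : Fin M) (b : Bool), φ' a ≤ φ' (Function.update a i b))) ∧
    (∀ a : Fin M → Bool, norm1 a = 2 →
      ¬ (∀ (i : Fin M) (b : Bool), φ' a ≤ φ' (Function.update a i b))) ∧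
    (∀ a : Fin M → Bool, (norm1 a = 1 ∨ 2 < norm1 a) →
      ∀ (i : Fin M) (b : Bool), φ' a ≤ φ' (Function.update a i b)) :=
  stmt_5_general hM C W d hd1 φ' hc1 hc2
end

section
/- Let φ' be a common cost over profiles a ∈ {0,1}^M of the form φ'(a) = g(‖a‖₁) + h(a) where h(a) = d_i·[‖a‖₁ = 1 ∧ a_i = 1] + W·[‖a‖₁ ≠ 1] with 0 ≤ d_i < W. If g is strictly increasing on {0,1,…,M}, then every profile a with ‖a‖₁ ≥ 2 admits a strictly cost-decreasing unilateral deviation; hence no profile with two or more transmitters is a Nash equilibrium of the game with utility -φ'. -/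
theorem norm1_le {M : ℕ} (a : Fin M → Bool) : norm1 a ≤ M :=
  (Finset.sum_le_card_nsmul Finset.univ _ 1 fun i _ => by split <;> simp).trans (by simp)

theorem exists_eq_true_of_norm1_pos {M : ℕ} {a : Fin M → Bool} (ha : 0 < norm1 a) :
    ∃ i, a i = true := by
  obtain ⟨i, -, hi⟩ := Finset.exists_ne_zero_of_sum_ne_zero ha.ne'
  exact ⟨i, by simpa using hi⟩

theorem norm1_update_false_add_one {M : ℕ} (a : Fin M → Bool) {i : Fin M} (hi : a i = true) :
    norm1 (Function.update a i false) + 1 = norm1 a := by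
  unfold norm1
  rw [← Finset.add_sum_erase _ _ (Finset.mem_univ i),
    ← Finset.add_sum_erase _ _ (Finset.mem_univ i),
    Finset.sum_congr rfl fun j hj => by rw [Function.update_of_ne (Finset.ne_of_mem_erase hj)]]
  simp [hi, add_comm]

theorem penalty_le {M : ℕ} {W : ℝ} {d : Fin M → ℝ} (hdW : ∀ i, d i < W)
    {h : (Fin M → Bool) → ℝ}
    (hh1 : ∀ (a : Fin M → Bool) (i : Fin M), norm1 a = 1 → a i = true → h a = d i)
    (hh2 : ∀ a : Fin M → Bool, norm1 a ≠ 1 → h a = W) (a : Fin M → Bool) :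
    h a ≤ W := by
  by_cases ha : norm1 a = 1
  · obtain ⟨j, hj⟩ := exists_eq_true_of_norm1_pos (ha ▸ Nat.one_pos)
    exact (hh1 a j ha hj).trans_le (hdW j).le
  · exact (hh2 a ha).le

theorem cost_update_false_lt {M : ℕ} {W : ℝ} {d : Fin M → ℝ} {g : ℕ → ℝ}
    (hdW : ∀ i, d i < W) (hg : ∀ k l : ℕ, k < l → l ≤ M → g k < g l)
    {h : (Fin M → Bool) → ℝ}
    (hh1 : ∀ (a : Fin M → Bool) (i : Fin M), norm1 a = 1 → a i = true → h a = d i)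
    (hh2 : ∀ a : Fin M → Bool, norm1 a ≠ 1 → h a = W)
    {a : Fin M → Bool} (ha : 2 ≤ norm1 a) {i : Fin M} (hi : a i = true) :
    g (norm1 (Function.update a i false)) + h (Function.update a i false) <
      g (norm1 a) + h a := by
  have hcount := norm1_update_false_add_one a hi
  have hg_lt : g (norm1 (Function.update a i false)) < g (norm1 a) :=
    hg _ _ (by omega) (norm1_le a)
  have hh_le := penalty_le hdW hh1 hh2 (Function.update a i false)
  linarith [hh2 a (by omega)]

theorem stmt_19_general {M : ℕ} (W : ℝ) (d : Fin M → ℝ) (g : ℕ → ℝ)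
    (hdW : ∀ i, d i < W)
    (hg : ∀ k l : ℕ, k < l → l ≤ M → g k < g l)
    (h : (Fin M → Bool) → ℝ)
    (hh1 : ∀ (a : Fin M → Bool) (i : Fin M),
      norm1 a = 1 → a i = true → h a = d i)
    (hh2 : ∀ a : Fin M → Bool, norm1 a ≠ 1 → h a = W)
    (a : Fin M → Bool) (ha : 2 ≤ norm1 a) :
    (∃ (i : Fin M) (b : Bool),
      g (norm1 (Function.update a i b)) + h (Function.update a i b) <
        g (norm1 a) + h a) ∧
    ¬ (∀ (i : Fin M) (b : Bool),
      g (norm1 a) + h a ≤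
        g (norm1 (Function.update a i b)) + h (Function.update a i b)) := by
  obtain ⟨i, hi⟩ := exists_eq_true_of_norm1_pos (a := a) (by omega)
  have hlt := cost_update_false_lt hdW hg hh1 hh2 ha hi
  exact ⟨⟨i, false, hlt⟩, fun hall => (hall i false).not_gt hlt⟩

/-- With cost φ'(a) = g(‖a‖₁) + h(a), where h(a) = dᵢ for a single transmitter i and W
otherwise (0 ≤ dᵢ < W), and g strictly increasing on {0,…,M}, every profile with at least
two transmitters admits a strictly cost-decreasing unilateral deviation, hence is not a
Nash equilibrium. -/
theorem stmt_19 {M : ℕ} (hM : 2 ≤ M) (W : ℝ) (d : Fin M → ℝ) (g : ℕ → ℝ)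
    (hd0 : ∀ i, 0 ≤ d i) (hdW : ∀ i, d i < W)
    (hg : ∀ k l : ℕ, k < l → l ≤ M → g k < g l)
    (h : (Fin M → Bool) → ℝ)
    (hh1 : ∀ (a : Fin M → Bool) (i : Fin M),
      norm1 a = 1 → a i = true → h a = d i)
    (hh2 : ∀ a : Fin M → Bool, norm1 a ≠ 1 → h a = W)
    (a : Fin M → Bool) (ha : 2 ≤ norm1 a) :
    (∃ (i : Fin M) (b : Bool),
      g (norm1 (Function.update a i b)) + h (Function.update a i b) <
        g (norm1 a) + h a) ∧
    ¬ (∀ (i : Fin M) (b : Bool),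
      g (norm1 a) + h a ≤
        g (norm1 (Function.update a i b)) + h (Function.update a i b)) :=
  stmt_19_general W d g hdW hg h hh1 hh2 a ha
end
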